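/- Suppose arm $k'$ satisfies $\mathbb{E}[Y_{k'}] - c\,\mathbb{E}[X_{k'}] \ge 0$ and arm $k$ satisfies $\mathbb{E}[Y_k] - c\,\mathbb{E}[X_k] \le -\epsilon$ with $\epsilon > 0$, where $\mathbb{E}[X_k], \mathbb{E}[X_{k'}] \in (0,1]$, and the reward rates satisfy $\mathbb{E}[R_j]/\mathbb{E}[X_j] \le r_{\tt max}$ for $j \in \{k,k'\}$ and are nonnegative. Define $\Psi(j, Q) = -V \frac{\mathbb{E}[R_j]}{\mathbb{E}[X_j]} + Q \frac{\mathbb{E}[Y_j]}{\mathbb{E}[X_j]}$ for $V > 0$, $Q \ge 0$. Then for every $Q \ge \frac{V r_{\tt max}}{\epsilon}$, $\Psi(k', Q) - \Psi(k, Q) \ge 0$. -/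
import Mathlib


/-- A Slater arm has the smaller drift-plus-penalty index once the queue is large. -/
theorem stmt_17 (EX EX' EY EY' ER ER' V Q rmax c ε : ℝ)
    (hEX : EX ∈ Set.Ioc (0:ℝ) 1) (hEX' : EX' ∈ Set.Ioc (0:ℝ) 1)
    (hε : 0 < ε) (hV : 0 < V) (hQnn : 0 ≤ Q)
    (hviol : 0 ≤ EY' - c * EX') (hslater : EY - c * EX ≤ -ε)
    (hr : ER / EX ≤ rmax) (hr' : ER' / EX' ≤ rmax)
    (hrnn : 0 ≤ ER / EX) (hrnn' : 0 ≤ ER' / EX')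
    (hQ : V * rmax / ε ≤ Q) :
    0 ≤ (-V * (ER' / EX') + Q * (EY' / EX')) - (-V * (ER / EX) + Q * (EY / EX)) := by
  obtain ⟨hx, hx1⟩ := hEX
  obtain ⟨hx', hx1'⟩ := hEX'
  have h1 : c ≤ EY' / EX' := (le_div_iff₀ hx').mpr (by linarith)
  have h2 : EY / EX ≤ c - ε := by
    rw [div_le_iff₀ hx]
    nlinarith
  have hQε : V * rmax ≤ Q * ε := by
    rw [div_le_iff₀ hε] at hQ
    linarith
  nlinarith [mul_le_mul_of_nonneg_left hr hV.le,
    mul_nonneg hV.le hrnn',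
    mul_le_mul_of_nonneg_left h2 hQnn,
    mul_le_mul_of_nonneg_left h1 hQnn]
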